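/- arXiv:2002.05893 — 6 statements merged into one kernel-verified Lean document; each statement's English description precedes it below -/
import Mathlib

section
/- Fix positive integers K, N and distinct exponent vectors e_1, …, e_N ∈ ℕ^K. In the multivariate polynomial ring over ℝ with variables x_{i,k} indexed by i ∈ {1,…,N} and k ∈ {1,…,K}, consider the N×N matrix M whose (i,j) entry is the monomial ∏_{k=1}^K x_{i,k}^{e_j(k)}. Then det M is a nonzero polynomial. -/
open MvPolynomial

private noncomputable def dmap {K N : ℕ} (e : Fin N → Fin K → ℕ) (σ : Equiv.Perm (Fin N)) :
    (Fin N × Fin K) →₀ ℕ :=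
  Finsupp.equivFunOnFinite.symm (fun p => e (σ p.1) p.2)

private lemma prod_eq_monomial {K N : ℕ} (e : Fin N → Fin K → ℕ)
    (σ : Equiv.Perm (Fin N)) :
    (∏ i : Fin N, ∏ k : Fin K, (X (i, k) : MvPolynomial (Fin N × Fin K) ℝ) ^ e (σ i) k)
      = monomial (dmap e σ) (1 : ℝ) := by
  rw [monomial_eq, map_one, one_mul, Finsupp.prod_fintype]
  · exact (Fintype.prod_prod_type (fun p => (X p : MvPolynomial (Fin N × Fin K) ℝ) ^ (dmap e σ) p)).symm
  · intro p; simp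

private lemma dmap_inj {K N : ℕ} (e : Fin N → Fin K → ℕ) (he : Function.Injective e) :
    Function.Injective (dmap e) := by
  intro σ τ h
  apply Equiv.ext
  intro i
  apply he
  funext k
  have := DFunLike.congr_fun h (i, k)
  simpa [dmap] using this

/-- Fix positive integers `K, N` and distinct exponent vectors `e 1, …, e N ∈ ℕ^K`.
In the polynomial ring over `ℝ` with variables `x_{i,k}` (`i ∈ {1,…,N}`, `k ∈ {1,…,K}`),
the `N × N` matrix whose `(i, j)` entry is `∏_k x_{i,k} ^ (e j k)` has nonzero
determinant (as a polynomial). -/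
theorem monomial_matrix_det_ne_zero (K N : ℕ) (hK : 0 < K) (hN : 0 < N)
    (e : Fin N → Fin K → ℕ) (he : Function.Injective e) :
    Matrix.det (Matrix.of fun i j : Fin N =>
        ∏ k : Fin K, (X (i, k) : MvPolynomial (Fin N × Fin K) ℝ) ^ e j k) ≠ 0 := by
  intro h
  have hc : coeff (dmap e 1) (Matrix.det (Matrix.of fun i j : Fin N =>
      ∏ k : Fin K, (X (i, k) : MvPolynomial (Fin N × Fin K) ℝ) ^ e j k)) = 1 := by
    rw [Matrix.det_apply]
    have hterm : ∀ σ : Equiv.Perm (Fin N),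
        (∏ i : Fin N, (Matrix.of fun i j : Fin N =>
          ∏ k : Fin K, (X (i, k) : MvPolynomial (Fin N × Fin K) ℝ) ^ e j k) (σ i) i)
        = monomial (dmap e σ⁻¹) (1 : ℝ) := by
      intro σ
      rw [← prod_eq_monomial e σ⁻¹]
      rw [← Equiv.prod_comp σ (fun i => ∏ k : Fin K,
        (X (i, k) : MvPolynomial (Fin N × Fin K) ℝ) ^ e (σ⁻¹ i) k)]
      simp [Matrix.of_apply]
    rw [coeff_sum]
    have : ∀ σ : Equiv.Perm (Fin N),
        coeff (dmap e 1) (Equiv.Perm.sign σ •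
          ∏ i : Fin N, (Matrix.of fun i j : Fin N =>
            ∏ k : Fin K, (X (i, k) : MvPolynomial (Fin N × Fin K) ℝ) ^ e j k) (σ i) i)
        = if σ = 1 then 1 else 0 := by
      intro σ
      rw [hterm σ, coeff_smul, coeff_monomial]
      by_cases hσ : σ = 1
      · subst hσ; simp
      · rw [if_neg, if_neg hσ]
        · simp
        · intro hd
          exact hσ (inv_eq_one.mp (dmap_inj e he hd))
    rw [Finset.sum_congr rfl (fun σ _ => this σ)]
    simp
  rw [h] at hc
  simp at hc
end

section
/- Let M be a positive integer and consider the polynomial ring over ℝ in the 4 + 2M indeterminates h_a, h_b, h'_a, h'_b, u_1, v_1, …, u_M, v_M. Then the M+1 polynomials f_0 = h_a h'_b − h_b h'_a and f_m = h_a u_m + h_b v_m for m = 1, …, M are algebraically independent over ℝ. -/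
open MvPolynomial

/-- Variables for the `μ = 1/2` decodability argument: `inl 0 = h_a`, `inl 1 = h_b`,
`inl 2 = h'_a`, `inl 3 = h'_b`, `inr (m, 0) = u_m`, `inr (m, 1) = v_m`. -/
abbrev ZfVar (M : ℕ) : Type := Fin 4 ⊕ (Fin M × Fin 2)

/-- Specialization `h_a ↦ 1`, `h_b ↦ 0`, all other variables fixed. -/
noncomputable def zfSpec (M : ℕ) : MvPolynomial (ZfVar M) ℝ →ₐ[ℝ] MvPolynomial (ZfVar M) ℝ :=
  aeval (fun v : ZfVar M =>
    if v = Sum.inl 0 then 1 else if v = Sum.inl 1 then 0 else X v)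

/-- Let `M ≥ 1`.  In `ℝ[h_a, h_b, h'_a, h'_b, u_1, v_1, …, u_M, v_M]` the `M + 1`
polynomials `f_0 = h_a h'_b − h_b h'_a` and `f_m = h_a u_m + h_b v_m` (`m = 1, …, M`)
are algebraically independent over `ℝ`. -/
theorem zeroforcing_family_algebraicIndependent (M : ℕ) (hM : 0 < M) :
    AlgebraicIndependent ℝ
      (Fin.cases
        ((X (Sum.inl 0) : MvPolynomial (ZfVar M) ℝ) * X (Sum.inl 3) -
          X (Sum.inl 1) * X (Sum.inl 2))
        (fun m : Fin M =>
          (X (Sum.inl 0) : MvPolynomial (ZfVar M) ℝ) * X (Sum.inr (m, 0)) +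
            X (Sum.inl 1) * X (Sum.inr (m, 1))) :
        Fin (M + 1) → MvPolynomial (ZfVar M) ℝ) := by
  set f : Fin (M + 1) → MvPolynomial (ZfVar M) ℝ :=
    (Fin.cases
        ((X (Sum.inl 0) : MvPolynomial (ZfVar M) ℝ) * X (Sum.inl 3) -
          X (Sum.inl 1) * X (Sum.inl 2))
        (fun m : Fin M =>
          (X (Sum.inl 0) : MvPolynomial (ZfVar M) ℝ) * X (Sum.inr (m, 0)) +
            X (Sum.inl 1) * X (Sum.inr (m, 1)))) with hf
  set g : Fin (M + 1) → ZfVar M :=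
    Fin.cases (Sum.inl 3) (fun m => Sum.inr (m, 0)) with hg
  have hginj : Function.Injective g := by
    intro i j hij
    induction i using Fin.cases <;> induction j using Fin.cases <;>
      simp only [hg, Fin.cases_zero, Fin.cases_succ] at hij <;> simp_all
  have hXg : AlgebraicIndependent ℝ (X ∘ g : Fin (M + 1) → MvPolynomial (ZfVar M) ℝ) :=
    (MvPolynomial.algebraicIndependent_X (ZfVar M) ℝ).comp g hginj
  have hcomp : (zfSpec M) ∘ f = X ∘ g := by
    funext i
    induction i using Fin.cases with
    | zero => simp [hf, hg, zfSpec]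
    | succ m => simp [hf, hg, zfSpec]
  exact AlgebraicIndependent.of_comp (zfSpec M) (hcomp ▸ hXg)
end

section
/- Let M be a nonnegative integer and consider the polynomial ring over ℝ in the 2 + 2(M+1) indeterminates h_a, h_c, u_0, v_0, u_1, v_1, …, u_M, v_M. Then the M+1 polynomials g_m = h_a u_m + h_c v_m for m = 0, 1, …, M are algebraically independent over ℝ. -/
open MvPolynomial

/-- Variables: `inl 0 = h_a`, `inl 1 = h_c`, `inr (m, 0) = u_m`, `inr (m, 1) = v_m`
for `m = 0, 1, …, M`. -/
abbrev EffVar (M : ℕ) : Type := Fin 2 ⊕ (Fin (M + 1) × Fin 2)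

/-- Let `M ≥ 0`.  In `ℝ[h_a, h_c, u_0, v_0, u_1, v_1, …, u_M, v_M]` the `M + 1`
polynomials `g_m = h_a u_m + h_c v_m` (`m = 0, 1, …, M`) are algebraically
independent over `ℝ`. -/
theorem effective_channels_algebraicIndependent (M : ℕ) :
    AlgebraicIndependent ℝ
      (fun m : Fin (M + 1) =>
        (X (Sum.inl 0) : MvPolynomial (EffVar M) ℝ) * X (Sum.inr (m, 0)) +
          X (Sum.inl 1) * X (Sum.inr (m, 1))) := by
  have h := algebraicIndependent_X (σ := Fin (M + 1)) (R := ℝ)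
  refine AlgebraicIndependent.of_comp
    (aeval (R := ℝ) (fun v : EffVar M =>
      match v with
      | Sum.inl i => if i = 0 then (1 : MvPolynomial (Fin (M + 1)) ℝ) else 0
      | Sum.inr (m, j) => if j = 0 then X m else 0)) ?_
  have : (aeval (R := ℝ) (fun v : EffVar M =>
      match v with
      | Sum.inl i => if i = 0 then (1 : MvPolynomial (Fin (M + 1)) ℝ) else 0
      | Sum.inr (m, j) => if j = 0 then X m else 0)) ∘
      (fun m : Fin (M + 1) =>
        (X (Sum.inl 0) : MvPolynomial (EffVar M) ℝ) * X (Sum.inr (m, 0)) +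
          X (Sum.inl 1) * X (Sum.inr (m, 1))) =
      fun m : Fin (M + 1) => (X m : MvPolynomial (Fin (M + 1)) ℝ) := by
    funext m
    simp
  rw [this]
  exact h
end

section
/- Let μ ∈ [1/4, 1/2) and set γ = 2 − 4μ. Suppose real numbers d₁, d₂ ≥ 0 satisfy d₁(1 − γ) = d₂ γ, (7/4) d₁ + d₂ ≤ 1, and (3/2) d₁ + (7/6) d₂ ≤ 1. Then d₁ + d₂ ≤ min{ 2/(5 − 6μ), 6/(11 − 8μ) }. -/
/-- Converse for `μ ∈ [1/4, 1/2)` via memory sharing: with `γ = 2 − 4μ`, if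
`d₁, d₂ ≥ 0` satisfy `d₁(1−γ)= d₂γ`, `(7/4)d₁ + d₂ ≤ 1` and `(3/2)d₁ + (7/6)d₂ ≤ 1`,
then `d₁ + d₂ ≤ min{2/(5−6μ), 6/(11−8μ)}`. -/
theorem converse_small_cache (μ γ d₁ d₂ : ℝ)
    (hμl : 1 / 4 ≤ μ) (hμu : μ < 1 / 2) (hγ : γ = 2 - 4 * μ)
    (hd₁ : 0 ≤ d₁) (hd₂ : 0 ≤ d₂)
    (hshare : d₁ * (1 - γ) = d₂ * γ)
    (h1 : 7 / 4 * d₁ + d₂ ≤ 1)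
    (h2 : 3 / 2 * d₁ + 7 / 6 * d₂ ≤ 1) :
    d₁ + d₂ ≤ min (2 / (5 - 6 * μ)) (6 / (11 - 8 * μ)) := by
  have hp1 : (0:ℝ) < 5 - 6 * μ := by linarith
  have hp2 : (0:ℝ) < 11 - 8 * μ := by linarith
  rw [le_min_iff]
  constructor
  · rw [le_div_iff₀ hp1]; nlinarith [hshare, h1]
  · rw [le_div_iff₀ hp2]; nlinarith [hshare, h2]
end

section
/- Let μ ∈ [1/2, 1] and set γ = 2 − 2μ. Suppose real numbers d₂, d₃ ≥ 0 satisfy d₂(1 − γ) = d₃ γ and (7/6) d₂ + d₃ ≤ 1. Then d₂ + d₃ ≤ 3/(4 − μ), equivalently the reciprocal of the per-user DoF satisfies 1/(d₂ + d₃) ≥ 4/3 − μ/3 whenever d₂ + d₃ > 0. -/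
/-- Converse for `μ ∈ [1/2, 1]` via memory sharing: with `γ = 2 − 2μ`, if
`d₂, d₃ ≥ 0` satisfy `d₂(1−γ) = d₃γ` and `(7/6)d₂ + d₃ ≤ 1`, then
`d₂ + d₃ ≤ 3/(4−μ)`, equivalently `1/(d₂+d₃) ≥ 4/3 − μ/3` whenever `d₂ + d₃ > 0`. -/
theorem converse_large_cache (μ γ d₂ d₃ : ℝ)
    (hμl : 1 / 2 ≤ μ) (hμu : μ ≤ 1) (hγ : γ = 2 - 2 * μ)
    (hd₂ : 0 ≤ d₂) (hd₃ : 0 ≤ d₃)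
    (hshare : d₂ * (1 - γ) = d₃ * γ)
    (h1 : 7 / 6 * d₂ + d₃ ≤ 1) :
    d₂ + d₃ ≤ 3 / (4 - μ) ∧
      (0 < d₂ + d₃ → 4 / 3 - μ / 3 ≤ 1 / (d₂ + d₃)) := by
  subst hγ
  have hpos : (0:ℝ) < 4 - μ := by linarith
  have key : (d₂ + d₃) * (4 - μ) ≤ 3 := by nlinarith
  have hmain : d₂ + d₃ ≤ 3 / (4 - μ) := (le_div_iff₀ hpos).mpr key
  refine ⟨hmain, fun hsum => ?_⟩
  have h2 : (4 - μ) / 3 ≤ 1 / (d₂ + d₃) := by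
    rw [div_le_div_iff₀ (by norm_num) hsum]
    linarith [key]
  linarith
end

section
/- For every μ ∈ [1/4, 1/2), the quantity min{ 2/(5 − 6μ), 6/(11 − 8μ) } − 6/(17 − 20μ) is nonnegative and at most 4/39; moreover, it equals 4/39 at μ = 2/5. -/
/-- For every `μ ∈ [1/4, 1/2)`, the additive gap
`min{2/(5−6μ), 6/(11−8μ)} − 6/(17−20μ)` is nonnegative and at most `4/39`;
moreover it equals `4/39` at `μ = 2/5`. -/
theorem dof_gap_bounds :
    (∀ μ : ℝ, 1 / 4 ≤ μ → μ < 1 / 2 →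
      0 ≤ min (2 / (5 - 6 * μ)) (6 / (11 - 8 * μ)) - 6 / (17 - 20 * μ) ∧
        min (2 / (5 - 6 * μ)) (6 / (11 - 8 * μ)) - 6 / (17 - 20 * μ) ≤ 4 / 39) ∧
      min (2 / (5 - 6 * (2 / 5 : ℝ))) (6 / (11 - 8 * (2 / 5 : ℝ)))
        - 6 / (17 - 20 * (2 / 5 : ℝ)) = 4 / 39 := by
  constructor
  · intro μ h1 h2
    have d1 : (0:ℝ) < 5 - 6*μ := by linarith
    have d2 : (0:ℝ) < 11 - 8*μ := by linarith
    have d3 : (0:ℝ) < 17 - 20*μ := by linarith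
    constructor
    · have ha : 6/(17-20*μ) ≤ 2/(5-6*μ) := by
        rw [div_le_div_iff₀ d3 d1]; nlinarith
      have hb : 6/(17-20*μ) ≤ 6/(11-8*μ) := by
        rw [div_le_div_iff₀ d3 d2]; nlinarith
      have := le_min ha hb
      linarith
    · rcases le_or_gt μ (2/5) with hc | hc
      · have hm : min (2/(5-6*μ)) (6/(11-8*μ)) ≤ 2/(5-6*μ) := min_le_left _ _
        have h4 : 2/(5-6*μ) - 6/(17-20*μ) ≤ 4/39 := by
          rw [div_sub_div _ _ (ne_of_gt d1) (ne_of_gt d3),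
            div_le_div_iff₀ (by positivity) (by norm_num : (0:ℝ) < 39)]
          nlinarith [mul_nonneg (by linarith : (0:ℝ) ≤ 2/5 - μ)
            (by linarith : (0:ℝ) ≤ 23/24 - μ)]
        linarith
      · have hm : min (2/(5-6*μ)) (6/(11-8*μ)) ≤ 6/(11-8*μ) := min_le_right _ _
        have h4 : 6/(11-8*μ) - 6/(17-20*μ) ≤ 4/39 := by
          rw [div_sub_div _ _ (ne_of_gt d2) (ne_of_gt d3),
            div_le_div_iff₀ (by positivity) (by norm_num : (0:ℝ) < 39)]
          nlinarith [mul_nonneg (by linarith : (0:ℝ) ≤ μ - 2/5)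
            (by linarith : (0:ℝ) ≤ μ + 41/16)]
        linarith
  · norm_num
end
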